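/- arXiv:1712.04225 — 10 statements merged into one kernel-verified Lean document; each statement's English description precedes it below -/
import Mathlib

section
/- Let a, b, d < 0 and c > 0, and let W_n be the normalized sequence with W_0 = 1, W_1 = z, W_n = (az+b)W_{n-1} + (cz+d)W_{n-2}. Set x_A = −b/a and x_B = −d/c. Then for all n ≥ 1, W_n(x_A) = (c(x_A − x_B))^{n/2} if n is even, and W_n(x_A) = (c(x_A − x_B))^{(n−1)/2}·x_A if n is odd; consequently (−1)^{⌈n/2⌉}·W_n(x_A) > 0. -/
/-!
At the zero `x_A` of `A(z) = az + b` the three-term recurrence loses its middle term, so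
`W_n(x_A) = B(x_A) W_{n-2}(x_A)` with `B(x_A) = c(x_A - x_B)`. Hence `W_n(x_A)` is `B(x_A)^{⌊n/2⌋}`
times `W_0(x_A) = 1` or `W_1(x_A) = x_A`, according to the parity of `n`. Both `B(x_A)` and `x_A` are
negative, which gives the sign.
-/

open Polynomial

theorem eq_pow_div_two_mul_of_two_step {M : Type*} [Monoid M] {u : ℕ → M} {k : M}
    (h : ∀ n, u (n + 2) = k * u n) (n : ℕ) : u n = k ^ (n / 2) * u (n % 2) := by
  induction n using Nat.twoStepInduction with
  | zero => simp
  | one => simp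
  | more n ih _ =>
    rw [h, ih, show (n + 2) / 2 = n / 2 + 1 by omega, show (n + 2) % 2 = n % 2 by omega,
      pow_succ', mul_assoc]

theorem neg_one_pow_mul_pos_of_two_step {R : Type*} [CommRing R] [LinearOrder R]
    [IsStrictOrderedRing R] {u : ℕ → R} {k : R} (h : ∀ n, u (n + 2) = k * u n) (hk : k < 0) (h0 : 0 < u 0)
    (h1 : u 1 < 0) (n : ℕ) : 0 < (-1) ^ ((n + 1) / 2) * u n := by
  have hk' : 0 < -k := neg_pos.2 hk
  rw [eq_pow_div_two_mul_of_two_step h n]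
  obtain ⟨m, rfl | rfl⟩ := Nat.even_or_odd' n
  · rw [show (2 * m + 1) / 2 = m by omega, show 2 * m / 2 = m by omega, Nat.mul_mod_right,
      ← mul_assoc, ← mul_pow, neg_one_mul]
    exact mul_pos (pow_pos hk' m) h0
  · rw [show (2 * m + 1 + 1) / 2 = m + 1 by omega, show (2 * m + 1) / 2 = m by omega,
      show (2 * m + 1) % 2 = 1 by omega,
      show (-1 : R) ^ (m + 1) * (k ^ m * u 1) = (-k) ^ m * (-u 1) by ring]
    exact mul_pos (pow_pos hk' m) (neg_pos.2 h1)

theorem eval_add_two_of_isRoot {R : Type*} [CommRing R] {A B : R[X]} {W : ℕ → R[X]}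
    (hrec : ∀ n, W (n + 2) = A * W (n + 1) + B * W n) {x : R} (hx : A.IsRoot x) (n : ℕ) :
    (W (n + 2)).eval x = B.eval x * (W n).eval x := by
  rw [hrec, eval_add, eval_mul, eval_mul, hx.eq_zero, zero_mul, zero_add]

theorem stmt_6 (a b c d : ℝ) (ha : a < 0) (hb : b < 0) (hd : d < 0) (hc : 0 < c)
    (W : ℕ → Polynomial ℝ)
    (hW0 : W 0 = 1) (hW1 : W 1 = X)
    (hrec : ∀ n, 2 ≤ n →
      W n = (C a * X + C b) * W (n - 1) + (C c * X + C d) * W (n - 2)) :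
    ∀ n, 1 ≤ n →
      (Even n → (W n).eval (-b / a) = (c * (-b / a - -d / c)) ^ (n / 2)) ∧
      (Odd n → (W n).eval (-b / a) = (c * (-b / a - -d / c)) ^ ((n - 1) / 2) * (-b / a)) ∧
      0 < (-1 : ℝ) ^ ((n + 1) / 2) * (W n).eval (-b / a) := by
  intro n _
  have ha0 : a ≠ 0 := ha.ne
  have hc0 : c ≠ 0 := hc.ne'
  set x := -b / a with hx
  have hx_neg : x < 0 := div_neg_of_pos_of_neg (neg_pos.2 hb) ha
  have hroot : (C a * X + C b).IsRoot x := by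
    simp only [IsRoot, eval_add, eval_mul, eval_C, eval_X, hx]
    field_simp
    ring
  have hBx : c * (x - -d / c) = (C c * X + C d).eval x := by
    simp only [eval_add, eval_mul, eval_C, eval_X]
    field_simp
    ring
  have hstep : ∀ n, (W (n + 2)).eval x = (C c * X + C d).eval x * (W n).eval x :=
    eval_add_two_of_isRoot (fun n => by simpa using hrec (n + 2) (by omega)) hroot
  have hW_eq := eq_pow_div_two_mul_of_two_step (u := fun n => (W n).eval x) hstep n
  refine ⟨fun he => ?_, fun ho => ?_, ?_⟩
  · rw [hW_eq, Nat.even_iff.1 he, hW0, eval_one, mul_one, hBx]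
  · have hn_odd := Nat.odd_iff.1 ho
    rw [hW_eq, hn_odd, hW1, eval_X, hBx, show (n - 1) / 2 = n / 2 by omega]
  · refine neg_one_pow_mul_pos_of_two_step (u := fun n => (W n).eval x) hstep ?_
      (by simp [hW0]) (by simpa [hW1]) n
    simp only [eval_add, eval_mul, eval_C, eval_X]
    nlinarith
end

section
/- Let a, b, d < 0 and c > 0. Define x_Δ^± = (−ab − 2c ± 2√(Δ_Δ))/a² where Δ_Δ = −a²d + abc + c², assumed nonnegative, and x_A = −b/a, x_B = −d/c. Then x_Δ^− < x_A < 0 < x_B and x_A < x_Δ^+ < x_B. -/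
/-!
Write `s = √Δ_Δ`, so that `x_Δ^± = x_A + 2(-c ± s)/a²`. Since `Δ_Δ - c² = -a²d + abc > 0`,
we have `s > c > 0`, which places `x_A` strictly between `x_Δ^-` and `x_Δ^+`. Multiplying out
the denominators, `x_Δ^+ < x_B` becomes `0 < s² - 2cs + c² = (s - c)²`.
-/

lemma neg_div_eq_neg_mul_div_sq {a : ℝ} (ha : a ≠ 0) (b : ℝ) : -b / a = -a * b / a ^ 2 := by
  field_simp

lemma div_sq_lt_neg_div_iff {a : ℝ} (ha : a ≠ 0) (b x : ℝ) :
    x / a ^ 2 < -b / a ↔ x < -a * b := by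
  rw [neg_div_eq_neg_mul_div_sq ha, div_lt_div_iff_of_pos_right (by positivity)]

lemma neg_div_lt_div_sq_iff {a : ℝ} (ha : a ≠ 0) (b x : ℝ) :
    -b / a < x / a ^ 2 ↔ -a * b < x := by
  rw [neg_div_eq_neg_mul_div_sq ha, div_lt_div_iff_of_pos_right (by positivity)]

lemma div_sq_lt_neg_div_of_sq_eq {a b c d s : ℝ} (ha : a ≠ 0) (hc : 0 < c)
    (hs : s ^ 2 = -a ^ 2 * d + a * b * c + c ^ 2) (hsc : s ≠ c) :
    (-a * b - 2 * c + 2 * s) / a ^ 2 < -d / c := by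
  have hsq : 0 < (s - c) ^ 2 := sq_pos_of_ne_zero (sub_ne_zero.2 hsc)
  rw [div_lt_div_iff₀ (by positivity) hc]
  nlinarith

theorem stmt_8 (a b c d : ℝ) (ha : a < 0) (hb : b < 0) (hd : d < 0) (hc : 0 < c)
    (hΔΔ : 0 ≤ -a ^ 2 * d + a * b * c + c ^ 2) :
    (-a * b - 2 * c - 2 * Real.sqrt (-a ^ 2 * d + a * b * c + c ^ 2)) / a ^ 2 < -b / a ∧
    -b / a < 0 ∧ (0 : ℝ) < -d / c ∧
    -b / a < (-a * b - 2 * c + 2 * Real.sqrt (-a ^ 2 * d + a * b * c + c ^ 2)) / a ^ 2 ∧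
    (-a * b - 2 * c + 2 * Real.sqrt (-a ^ 2 * d + a * b * c + c ^ 2)) / a ^ 2 < -d / c := by
  set s := Real.sqrt (-a ^ 2 * d + a * b * c + c ^ 2)
  have hcs : c < s := by
    refine (Real.lt_sqrt hc.le).2 ?_
    nlinarith [mul_pos (mul_pos_of_neg_of_neg ha hb) hc,
      mul_pos (sq_pos_of_neg ha) (neg_pos.2 hd)]
  refine ⟨(div_sq_lt_neg_div_iff ha.ne b _).2 (by linarith),
    div_neg_of_pos_of_neg (neg_pos.2 hb) ha, div_pos (neg_pos.2 hd) hc,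
    (neg_div_lt_div_sq_iff ha.ne b _).2 (by linarith),
    div_sq_lt_neg_div_of_sq_eq ha.ne hc (Real.sq_sqrt hΔΔ) hcs.ne'⟩
end

section
/- Let a, b, d < 0 and c > 0, and let W_n be the normalized sequence. If x_Δ^− = (−ab − 2c − 2√(Δ_Δ))/a² is real (i.e. Δ_Δ = −a²d + abc + c² ≥ 0), then W_n(x_Δ^−) < 0 for all n ≥ 1. -/
/-!
At `x = x_Δ^-` the discriminant `(a x + b)² + 4 (c x + d)` of the characteristic polynomial of
the recurrence vanishes, so `r = (a x + b) / 2` is a double root and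
`W_{n+1}(x) = (x + n (x - r)) rⁿ`. Here `r = -(c + √Δ_Δ) / a > 0` and `x < 0`, so both
`x` and `x - r` are negative and every `W_{n+1}(x)` is negative.
-/

open Polynomial

theorem eq_add_mul_mul_pow_of_double_root {R : Type*} [CommRing R] (u : ℕ → R) (r : R)
    (hu : ∀ n, u (n + 2) = 2 * r * u (n + 1) - r ^ 2 * u n) (n : ℕ) :
    u (n + 1) = (u 1 + n * (u 1 - r * u 0)) * r ^ n := by
  induction n using Nat.twoStepInduction with
  | zero => simp
  | one => rw [hu 0]; push_cast; ring
  | more n ih₀ ih₁ =>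
    rw [hu (n + 1), ih₀, ih₁]
    push_cast
    ring

section Normalized

variable {a b c d : ℝ} {W : ℕ → ℝ[X]}

theorem eval_add_two_eq_of_rec
    (hrec : ∀ n, 2 ≤ n → W n = (C a * X + C b) * W (n - 1) + (C c * X + C d) * W (n - 2))
    (x : ℝ) (n : ℕ) :
    (W (n + 2)).eval x = (a * x + b) * (W (n + 1)).eval x + (c * x + d) * (W n).eval x := by
  rw [hrec (n + 2) (by omega)]
  simp

theorem eval_succ_eq_of_discrim_eq_zero (hW0 : W 0 = 1) (hW1 : W 1 = X)
    (hrec : ∀ n, 2 ≤ n → W n = (C a * X + C b) * W (n - 1) + (C c * X + C d) * W (n - 2))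
    {x : ℝ} (hx : (a * x + b) ^ 2 + 4 * (c * x + d) = 0) (n : ℕ) :
    (W (n + 1)).eval x = (x + n * (x - (a * x + b) / 2)) * ((a * x + b) / 2) ^ n := by
  have hu : ∀ n, (W (n + 2)).eval x =
      2 * ((a * x + b) / 2) * (W (n + 1)).eval x - ((a * x + b) / 2) ^ 2 * (W n).eval x := by
    intro n
    rw [eval_add_two_eq_of_rec hrec]
    linear_combination (W n).eval x / 4 * hx
  rw [eq_add_mul_mul_pow_of_double_root (fun n ↦ (W n).eval x) _ hu, hW0, hW1]
  simp

end Normalized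

section SmallerRoot

variable {a b c d s : ℝ}

theorem sq_add_four_mul_eq_zero_of_smaller_root (ha : a ≠ 0)
    (hs : s ^ 2 = -a ^ 2 * d + a * b * c + c ^ 2) {x : ℝ}
    (hx : x = (-a * b - 2 * c - 2 * s) / a ^ 2) :
    (a * x + b) ^ 2 + 4 * (c * x + d) = 0 := by
  subst hx
  field_simp
  linear_combination 4 * hs

theorem smaller_root_neg (ha : a < 0) (hb : b < 0) (hc : 0 < c) (hs : 0 ≤ s) :
    (-a * b - 2 * c - 2 * s) / a ^ 2 < 0 :=
  div_neg_of_neg_of_pos (by nlinarith) (sq_pos_of_neg ha)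

theorem mul_smaller_root_add_pos (ha : a < 0) (hc : 0 < c) (hs : 0 ≤ s) :
    0 < a * ((-a * b - 2 * c - 2 * s) / a ^ 2) + b := by
  have ha₀ : a ≠ 0 := ha.ne
  have hA : a * ((-a * b - 2 * c - 2 * s) / a ^ 2) + b = -2 * (c + s) / a := by
    field_simp
    ring
  rw [hA]
  exact div_pos_of_neg_of_neg (by linarith) ha

end SmallerRoot

theorem stmt_9_general (a b c d : ℝ) (ha : a < 0) (hb : b < 0) (hc : 0 < c)
    (hΔΔ : 0 ≤ -a ^ 2 * d + a * b * c + c ^ 2)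
    (W : ℕ → Polynomial ℝ)
    (hW0 : W 0 = 1) (hW1 : W 1 = X)
    (hrec : ∀ n, 2 ≤ n →
      W n = (C a * X + C b) * W (n - 1) + (C c * X + C d) * W (n - 2)) :
    ∀ n, 1 ≤ n →
      (W n).eval ((-a * b - 2 * c - 2 * Real.sqrt (-a ^ 2 * d + a * b * c + c ^ 2)) / a ^ 2)
        < 0 := by
  intro n hn
  obtain ⟨m, rfl⟩ := Nat.exists_eq_add_of_le' hn
  have hs := Real.sqrt_nonneg (-a ^ 2 * d + a * b * c + c ^ 2)
  have hx := smaller_root_neg ha hb hc hs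
  have hA := mul_smaller_root_add_pos (b := b) ha hc hs
  rw [eval_succ_eq_of_discrim_eq_zero hW0 hW1 hrec
    (sq_add_four_mul_eq_zero_of_smaller_root ha.ne (Real.sq_sqrt hΔΔ) rfl)]
  refine mul_neg_of_neg_of_pos ?_ (by positivity)
  nlinarith [(m.cast_nonneg : (0 : ℝ) ≤ m)]

theorem stmt_9 (a b c d : ℝ) (ha : a < 0) (hb : b < 0) (hd : d < 0) (hc : 0 < c)
    (hΔΔ : 0 ≤ -a ^ 2 * d + a * b * c + c ^ 2)
    (W : ℕ → Polynomial ℝ)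
    (hW0 : W 0 = 1) (hW1 : W 1 = X)
    (hrec : ∀ n, 2 ≤ n →
      W n = (C a * X + C b) * W (n - 1) + (C c * X + C d) * W (n - 2)) :
    ∀ n, 1 ≤ n →
      (W n).eval ((-a * b - 2 * c - 2 * Real.sqrt (-a ^ 2 * d + a * b * c + c ^ 2)) / a ^ 2)
        < 0 :=
  stmt_9_general a b c d ha hb hc hΔΔ W hW0 hW1 hrec
end

section
/- Let a, b, d < 0 and 0 < c ≤ c^− = −2√(d(a−1)) − b. Then both roots x_g^± of g(z) = (1−a)z² − (b+c)z − d are real and negative, and consequently (−1)^n·W_n(x_g^±) > 0 for all n ≥ 0, where W_n is the normalized sequence. -/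
/-!
A root `x` of `g` is exactly a point where `x ^ 2 = (a x + b) x + (c x + d)`, so the three-term
recurrence for `W n` evaluated at `x` is satisfied by the powers `x ^ n`, whence `W n (x) = x ^ n`.
The bound `c ≤ c⁻` makes `b + c ≤ -2 √(d (a - 1)) ≤ 0`, which both keeps the discriminant of `g`
nonnegative and, with `1 - a > 0` and `-d > 0`, forces every root to be negative; so
`(-1) ^ n W n (x) = (-x) ^ n > 0`.
-/

open Polynomial

theorem eval_eq_pow_of_sq_eq {R : Type*} [CommRing R] {a b c d x : R} {W : ℕ → R[X]}
    (hW0 : W 0 = 1) (hW1 : W 1 = X)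
    (hrec : ∀ n, 2 ≤ n →
      W n = (C a * X + C b) * W (n - 1) + (C c * X + C d) * W (n - 2))
    (hx : x ^ 2 = (a * x + b) * x + (c * x + d)) (n : ℕ) :
    (W n).eval x = x ^ n := by
  induction n using Nat.twoStepInduction with
  | zero => simp [hW0]
  | one => simp [hW1]
  | more m ih ih' =>
    rw [hrec (m + 2) (by omega), show m + 2 - 1 = m + 1 from rfl, Nat.add_sub_cancel]
    simp only [eval_add, eval_mul, eval_C, eval_X, ih, ih']
    linear_combination -(x ^ m * hx)

theorem four_mul_le_sq_of_le_neg_two_mul_sqrt {t u : ℝ} (hu : 0 ≤ u) (ht : t ≤ -2 * √u) :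
    4 * u ≤ t ^ 2 := by
  nlinarith [Real.sq_sqrt hu, Real.sqrt_nonneg u]

theorem neg_of_quadratic_eq_zero {p q r x : ℝ} (hp : 0 ≤ p) (hq : q ≤ 0) (hr : r < 0)
    (h : p * x ^ 2 - q * x - r = 0) : x < 0 := by
  by_contra! hx
  nlinarith [mul_nonneg hp (sq_nonneg x), mul_nonneg (neg_nonneg.mpr hq) hx]

theorem stmt_11_general (a b c d : ℝ) (ha : a < 0) (hd : d < 0)
    (hcm : c ≤ -2 * Real.sqrt (d * (a - 1)) - b)
    (W : ℕ → Polynomial ℝ)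
    (hW0 : W 0 = 1) (hW1 : W 1 = X)
    (hrec : ∀ n, 2 ≤ n →
      W n = (C a * X + C b) * W (n - 1) + (C c * X + C d) * W (n - 2)) :
    0 ≤ (b + c) ^ 2 + 4 * d * (1 - a) ∧
    ∀ x : ℝ, (1 - a) * x ^ 2 - (b + c) * x - d = 0 →
      x < 0 ∧ ∀ n : ℕ, 0 < (-1 : ℝ) ^ n * (W n).eval x := by
  have hda : 0 ≤ d * (a - 1) := by nlinarith
  have hbc : b + c ≤ -2 * √(d * (a - 1)) := by linarith
  refine ⟨by linarith [four_mul_le_sq_of_le_neg_two_mul_sqrt hda hbc], fun x hx => ?_⟩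
  have hbc_nonpos : b + c ≤ 0 := by linarith [Real.sqrt_nonneg (d * (a - 1))]
  have hx_neg : x < 0 := neg_of_quadratic_eq_zero (by linarith) hbc_nonpos hd hx
  refine ⟨hx_neg, fun n => ?_⟩
  have hW_eval : (W n).eval x = x ^ n :=
    eval_eq_pow_of_sq_eq hW0 hW1 hrec (by linear_combination hx) n
  rw [hW_eval, ← mul_pow, neg_one_mul]
  exact pow_pos (neg_pos.mpr hx_neg) n

theorem stmt_11 (a b c d : ℝ) (ha : a < 0) (hb : b < 0) (hd : d < 0)
    (hc : 0 < c) (hcm : c ≤ -2 * Real.sqrt (d * (a - 1)) - b)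
    (W : ℕ → Polynomial ℝ)
    (hW0 : W 0 = 1) (hW1 : W 1 = X)
    (hrec : ∀ n, 2 ≤ n →
      W n = (C a * X + C b) * W (n - 1) + (C c * X + C d) * W (n - 2)) :
    0 ≤ (b + c) ^ 2 + 4 * d * (1 - a) ∧
    ∀ x : ℝ, (1 - a) * x ^ 2 - (b + c) * x - d = 0 →
      x < 0 ∧ ∀ n : ℕ, 0 < (-1 : ℝ) ^ n * (W n).eval x :=
  stmt_11_general a b c d ha hd hcm W hW0 hW1 hrec
end

section
/- Let a, b, d < 0 and c ≥ c^+ = 2√(d(a−1)) − b. Then x_B = −d/c < x_g^−, where x_g^− is the smaller root of g(z) = (1−a)z² − (b+c)z − d. -/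
/-! The point `x_B = -d/c` lies left of the vertex `(b+c)/(2(1-a))` of the upward parabola `g`
(this is the inequality `c(b+c) + 2d(1-a) > 0`), and `g(x_B) = d(d(1-a) + bc)/c² > 0`.
Left of the vertex `g` is positive exactly before its smaller root. -/

open Real

/-- When there are no real roots, `√` returns `0` and the "smaller root" is the vertex. -/
theorem lt_smaller_root_of_lt_vertex {p q r x : ℝ} (hp : 0 < p) (hx : x < q / (2 * p))
    (hg : 0 < p * x ^ 2 - q * x - r) :
    x < (q - √(q ^ 2 + 4 * r * p)) / (2 * p) := by
  have hvertex : 0 < q - 2 * p * x := by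
    rw [lt_div_iff₀ (by positivity)] at hx
    linarith
  have hsqrt : √(q ^ 2 + 4 * r * p) < q - 2 * p * x := by
    rw [sqrt_lt' hvertex]
    nlinarith
  rw [lt_div_iff₀ (by positivity)]
  linarith

theorem mul_add_add_two_mul_pos_of_two_sqrt_sub_le {a b c d : ℝ} (ha : a < 1) (hb : b < 0)
    (hd : d < 0) (hc : 2 * √(d * (a - 1)) - b ≤ c) :
    0 < c * (b + c) + 2 * d * (1 - a) := by
  have hda : 0 < d * (a - 1) := mul_pos_of_neg_of_neg hd (by linarith)
  have hs : 0 < √(d * (a - 1)) := sqrt_pos.2 hda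
  have hs2 : √(d * (a - 1)) ^ 2 = d * (a - 1) := sq_sqrt hda.le
  nlinarith

theorem stmt_13 (a b c d : ℝ) (ha : a < 0) (hb : b < 0) (hd : d < 0)
    (hc : 2 * Real.sqrt (d * (a - 1)) - b ≤ c) :
    -d / c <
      ((b + c) - Real.sqrt ((b + c) ^ 2 + 4 * d * (1 - a))) / (2 * (1 - a)) := by
  have hp : 0 < 1 - a := by linarith
  have hc0 : 0 < c := by linarith [sqrt_nonneg (d * (a - 1))]
  have hkey := mul_add_add_two_mul_pos_of_two_sqrt_sub_le (by linarith) hb hd hc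
  have hvertex : -d / c < (b + c) / (2 * (1 - a)) := by
    rw [div_lt_div_iff₀ hc0 (by positivity)]
    linarith
  have hg : 0 < (1 - a) * (-d / c) ^ 2 - (b + c) * (-d / c) - d := by
    have hval : (1 - a) * (-d / c) ^ 2 - (b + c) * (-d / c) - d
        = d * (d * (1 - a) + b * c) / c ^ 2 := by
      field_simp
      ring
    rw [hval]
    have hneg : d * (1 - a) + b * c < 0 := by nlinarith
    exact div_pos (mul_pos_of_neg_of_neg hd hneg) (by positivity)
  exact lt_smaller_root_of_lt_vertex hp hvertex hg
end

section
/- Let a, b, d < 0, c > 0, with Δ_Δ = −a²d + abc + c² ≥ 0, and let x_Δ^+ = (−ab − 2c + 2√Δ_Δ)/a². If c ≤ c^− = −2√(d(a−1)) − b, then x_Δ^+ ≤ x_g^−, where x_g^− is the smaller root of g(z) = (1−a)z² − (b+c)z − d. In fact, x_g^− − x_Δ^+ = 2(√Δ_Δ − √Δ_g)² / (a²√Δ_g + 4(1−a)√Δ_Δ − a²b + a²c + 2ab − 4ac + 4c) ≥ 0. -/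
/-! Writing `s = √Δ_Δ` and `t = √Δ_g`, clearing denominators turns the difference of the two
roots into a polynomial identity in `a, b, c, s, t` that holds modulo `s² = Δ_Δ` and
`t² = Δ_g`. For `a, b < 0 < c` every term of the denominator is nonnegative and `4c > 0`, so the
difference is a nonnegative square over a positive number. The bound `c ≤ c⁻` gives
`(b + c)² ≥ 4 (√(d (a - 1)))² ≥ 4 d (a - 1)`, i.e. `Δ_g ≥ 0`, so `t² = Δ_g` is not spoiled by the
junk value of `Real.sqrt` at negative arguments. -/

lemma four_mul_le_sq_of_two_mul_sqrt_le {x y : ℝ} (h : 2 * √x ≤ y) : 4 * x ≤ y ^ 2 := by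
  have hx : x ≤ √x ^ 2 := Real.sq_sqrt' (x := x) ▸ le_max_left x 0
  nlinarith [Real.sqrt_nonneg x]

lemma discrim_g_nonneg {a b c d : ℝ} (hcm : c ≤ -2 * √(d * (a - 1)) - b) :
    0 ≤ (b + c) ^ 2 + 4 * d * (1 - a) := by
  have := four_mul_le_sq_of_two_mul_sqrt_le (x := d * (a - 1)) (y := -(b + c)) (by linarith)
  nlinarith

lemma xg_sub_xΔ_eq {a b c d s t : ℝ} (ha : a ≠ 0) (ha₁ : a ≠ 1)
    (hs : s ^ 2 = -a ^ 2 * d + a * b * c + c ^ 2) (ht : t ^ 2 = (b + c) ^ 2 + 4 * d * (1 - a))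
    (hD : a ^ 2 * t + 4 * (1 - a) * s - a ^ 2 * b + a ^ 2 * c + 2 * a * b - 4 * a * c + 4 * c
      ≠ 0) :
    ((b + c) - t) / (2 * (1 - a)) - (-a * b - 2 * c + 2 * s) / a ^ 2
      = 2 * (s - t) ^ 2
        / (a ^ 2 * t + 4 * (1 - a) * s - a ^ 2 * b + a ^ 2 * c + 2 * a * b - 4 * a * c + 4 * c) := by
  have h₁ : 2 * (1 - a) ≠ 0 := mul_ne_zero two_ne_zero (sub_ne_zero.mpr (Ne.symm ha₁))
  have h₂ : a ^ 2 ≠ 0 := pow_ne_zero 2 ha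
  rw [div_sub_div _ _ h₁ h₂, div_eq_div_iff (mul_ne_zero h₁ h₂) hD]
  linear_combination (-(a ^ 4 + 4 * (1 - a) * a ^ 2)) * ht
    + (-(16 * (1 - a) ^ 2 + 4 * (1 - a) * a ^ 2)) * hs

lemma xg_sub_xΔ_denom_pos {a b c s t : ℝ} (ha : a ≤ 0) (hb : b ≤ 0) (hc : 0 < c)
    (hs : 0 ≤ s) (ht : 0 ≤ t) :
    0 < a ^ 2 * t + 4 * (1 - a) * s - a ^ 2 * b + a ^ 2 * c + 2 * a * b - 4 * a * c + 4 * c := by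
  have h₁ : 0 ≤ a ^ 2 * t := by positivity
  have h₂ : 0 ≤ (1 - a) * s := mul_nonneg (by linarith) hs
  have h₃ : 0 ≤ a ^ 2 * (c - b) := mul_nonneg (sq_nonneg a) (by linarith)
  have h₄ : 0 ≤ a * (b - 2 * c) := mul_nonneg_of_nonpos_of_nonpos ha (by linarith)
  linarith

theorem stmt_15_general (a b c d : ℝ) (ha : a < 0) (hb : b < 0)
    (hc : 0 < c) (hcm : c ≤ -2 * Real.sqrt (d * (a - 1)) - b)
    (hΔΔ : 0 ≤ -a ^ 2 * d + a * b * c + c ^ 2) :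
    ((b + c) - Real.sqrt ((b + c) ^ 2 + 4 * d * (1 - a))) / (2 * (1 - a))
        - (-a * b - 2 * c + 2 * Real.sqrt (-a ^ 2 * d + a * b * c + c ^ 2)) / a ^ 2
      = 2 * (Real.sqrt (-a ^ 2 * d + a * b * c + c ^ 2)
              - Real.sqrt ((b + c) ^ 2 + 4 * d * (1 - a))) ^ 2
        / (a ^ 2 * Real.sqrt ((b + c) ^ 2 + 4 * d * (1 - a))
            + 4 * (1 - a) * Real.sqrt (-a ^ 2 * d + a * b * c + c ^ 2)
            - a ^ 2 * b + a ^ 2 * c + 2 * a * b - 4 * a * c + 4 * c) ∧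
    (-a * b - 2 * c + 2 * Real.sqrt (-a ^ 2 * d + a * b * c + c ^ 2)) / a ^ 2
      ≤ ((b + c) - Real.sqrt ((b + c) ^ 2 + 4 * d * (1 - a))) / (2 * (1 - a)) := by
  have hD := xg_sub_xΔ_denom_pos ha.le hb.le hc (Real.sqrt_nonneg (-a ^ 2 * d + a * b * c + c ^ 2))
    (Real.sqrt_nonneg ((b + c) ^ 2 + 4 * d * (1 - a)))
  have hdiff := xg_sub_xΔ_eq ha.ne (by linarith) (Real.sq_sqrt hΔΔ)
    (Real.sq_sqrt (discrim_g_nonneg hcm)) hD.ne'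
  exact ⟨hdiff, sub_nonneg.mp (hdiff ▸ div_nonneg (by positivity) hD.le)⟩

theorem stmt_15 (a b c d : ℝ) (ha : a < 0) (hb : b < 0) (hd : d < 0)
    (hc : 0 < c) (hcm : c ≤ -2 * Real.sqrt (d * (a - 1)) - b)
    (hΔΔ : 0 ≤ -a ^ 2 * d + a * b * c + c ^ 2) :
    ((b + c) - Real.sqrt ((b + c) ^ 2 + 4 * d * (1 - a))) / (2 * (1 - a))
        - (-a * b - 2 * c + 2 * Real.sqrt (-a ^ 2 * d + a * b * c + c ^ 2)) / a ^ 2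
      = 2 * (Real.sqrt (-a ^ 2 * d + a * b * c + c ^ 2)
              - Real.sqrt ((b + c) ^ 2 + 4 * d * (1 - a))) ^ 2
        / (a ^ 2 * Real.sqrt ((b + c) ^ 2 + 4 * d * (1 - a))
            + 4 * (1 - a) * Real.sqrt (-a ^ 2 * d + a * b * c + c ^ 2)
            - a ^ 2 * b + a ^ 2 * c + 2 * a * b - 4 * a * c + 4 * c) ∧
    (-a * b - 2 * c + 2 * Real.sqrt (-a ^ 2 * d + a * b * c + c ^ 2)) / a ^ 2
      ≤ ((b + c) - Real.sqrt ((b + c) ^ 2 + 4 * d * (1 - a))) / (2 * (1 - a)) :=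
  stmt_15_general a b c d ha hb hc hcm hΔΔ
end

section
/- Let a, b, d < 0, c > 0 with Δ_Δ = −a²d + abc + c² > 0, and let x_Δ^+ be the larger root of Δ(z) = a²z² + (2ab+4c)z + (b²+4d). Then h(x_Δ^+) = 2(Δ_Δ − Δ_g)/(ab − ac + 2c + (2−a)√Δ_Δ), where h(z) = (2−a)z − b and Δ_g = (b+c)² + 4d(1−a); in particular h(x_Δ^+) and Δ_Δ − Δ_g have the same sign. -/
/-!
Writing `s = √Δ_Δ`, one has `a² · h(x_Δ^+) = 2((2 - a)s - (ab - ac + 2c))`. Multiplying by the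
conjugate, `((2 - a)s)² - (ab - ac + 2c)² = a²(Δ_Δ - Δ_g)` is a polynomial identity, and the
conjugate `ab - ac + 2c + (2 - a)s` is positive because each of its summands is.
-/

lemma sub_eq_sq_sub_sq_div_add {K : Type*} [Field K] {x y : K} (h : x + y ≠ 0) :
    x - y = (x ^ 2 - y ^ 2) / (x + y) := by
  rw [sq_sub_sq, mul_div_cancel_left₀ _ h]

lemma h_at_larger_root_eq (a b c s : ℝ) (ha : a ≠ 0) :
    (2 - a) * ((-a * b - 2 * c + 2 * s) / a ^ 2) - b
      = 2 * ((2 - a) * s - (a * b - a * c + 2 * c)) / a ^ 2 := by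
  field_simp
  ring

lemma conjugate_pos (a b c s : ℝ) (ha : a < 0) (hb : b < 0) (hc : 0 < c) (hs : 0 ≤ s) :
    0 < a * b - a * c + 2 * c + (2 - a) * s := by
  have hab : 0 < a * b := mul_pos_of_neg_of_neg ha hb
  have hac : a * c < 0 := mul_neg_of_neg_of_pos ha hc
  have has : 0 ≤ (2 - a) * s := mul_nonneg (by linarith) hs
  linarith

lemma sq_sub_sq_conjugate (a b c d s : ℝ) (hs : s ^ 2 = -a ^ 2 * d + a * b * c + c ^ 2) :
    ((2 - a) * s) ^ 2 - (a * b - a * c + 2 * c) ^ 2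
      = a ^ 2 * ((-a ^ 2 * d + a * b * c + c ^ 2) - ((b + c) ^ 2 + 4 * d * (1 - a))) := by
  linear_combination (2 - a) ^ 2 * hs

lemma h_at_larger_root_eq_div (a b c d s : ℝ) (ha : a ≠ 0)
    (hD : a * b - a * c + 2 * c + (2 - a) * s ≠ 0) (hs : s ^ 2 = -a ^ 2 * d + a * b * c + c ^ 2) :
    (2 - a) * ((-a * b - 2 * c + 2 * s) / a ^ 2) - b
      = 2 * ((-a ^ 2 * d + a * b * c + c ^ 2) - ((b + c) ^ 2 + 4 * d * (1 - a)))
        / (a * b - a * c + 2 * c + (2 - a) * s) := by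
  rw [h_at_larger_root_eq a b c s ha, sub_eq_sq_sub_sq_div_add (by rwa [add_comm]),
    sq_sub_sq_conjugate a b c d s hs, add_comm ((2 - a) * s)]
  field_simp

theorem stmt_16_general (a b c d : ℝ) (ha : a < 0) (hb : b < 0) (hc : 0 < c)
    (hΔΔ : 0 < -a ^ 2 * d + a * b * c + c ^ 2) :
    (2 - a) * ((-a * b - 2 * c + 2 * Real.sqrt (-a ^ 2 * d + a * b * c + c ^ 2)) / a ^ 2) - b
      = 2 * ((-a ^ 2 * d + a * b * c + c ^ 2) - ((b + c) ^ 2 + 4 * d * (1 - a)))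
        / (a * b - a * c + 2 * c
            + (2 - a) * Real.sqrt (-a ^ 2 * d + a * b * c + c ^ 2)) ∧
    (0 < (2 - a) * ((-a * b - 2 * c + 2 * Real.sqrt (-a ^ 2 * d + a * b * c + c ^ 2)) / a ^ 2) - b
      ↔ (b + c) ^ 2 + 4 * d * (1 - a) < -a ^ 2 * d + a * b * c + c ^ 2) ∧
    ((2 - a) * ((-a * b - 2 * c + 2 * Real.sqrt (-a ^ 2 * d + a * b * c + c ^ 2)) / a ^ 2) - b < 0
      ↔ -a ^ 2 * d + a * b * c + c ^ 2 < (b + c) ^ 2 + 4 * d * (1 - a)) := by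
  have hD := conjugate_pos a b c _ ha hb hc (Real.sqrt_nonneg (-a ^ 2 * d + a * b * c + c ^ 2))
  have key := h_at_larger_root_eq_div a b c d _ ha.ne hD.ne' (Real.sq_sqrt hΔΔ.le)
  refine ⟨key, ?_, ?_⟩
  · rw [key, div_pos_iff_of_pos_right hD, mul_pos_iff_of_pos_left two_pos, sub_pos]
  · rw [key, div_lt_iff₀ hD, zero_mul]
    constructor <;> intro h <;> linarith

theorem stmt_16 (a b c d : ℝ) (ha : a < 0) (hb : b < 0) (hd : d < 0) (hc : 0 < c)
    (hΔΔ : 0 < -a ^ 2 * d + a * b * c + c ^ 2) :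
    (2 - a) * ((-a * b - 2 * c + 2 * Real.sqrt (-a ^ 2 * d + a * b * c + c ^ 2)) / a ^ 2) - b
      = 2 * ((-a ^ 2 * d + a * b * c + c ^ 2) - ((b + c) ^ 2 + 4 * d * (1 - a)))
        / (a * b - a * c + 2 * c
            + (2 - a) * Real.sqrt (-a ^ 2 * d + a * b * c + c ^ 2)) ∧
    (0 < (2 - a) * ((-a * b - 2 * c + 2 * Real.sqrt (-a ^ 2 * d + a * b * c + c ^ 2)) / a ^ 2) - b
      ↔ (b + c) ^ 2 + 4 * d * (1 - a) < -a ^ 2 * d + a * b * c + c ^ 2) ∧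
    ((2 - a) * ((-a * b - 2 * c + 2 * Real.sqrt (-a ^ 2 * d + a * b * c + c ^ 2)) / a ^ 2) - b < 0
      ↔ -a ^ 2 * d + a * b * c + c ^ 2 < (b + c) ^ 2 + 4 * d * (1 - a)) :=
  stmt_16_general a b c d ha hb hc hΔΔ
end

section
/- Let a, b, d < 0 and c ≥ c^+ = 2√(d(a−1)) − b, and let (W_n) be the normalized polynomial sequence. Suppose W_3(z) = a²z³ + (2ab+ac+c)z² + (ad+bc+b²+d)z + bd has three real roots x₁, x₂, x₃ with x₁ < x_A = −b/a. Then x₁ is the unique negative root of W_3; i.e., x₂ > 0 and x₃ > 0. -/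
/-!
If x₂ and x₃ were not both positive, then, since x₁ < -b/a < 0 and x₁x₂x₃ = -bd/a² < 0, all three
roots would be negative and both middle coefficients U = 2ab + (a+1)c and V = d(a+1) + b(b+c) of W₃
positive. With s = √(d(a-1)) and c ≥ 2s - b this gives d(a+1) > -2bs ≥ 0, so a < -1, and then
b(a-1) > -2s(a+1) ≥ 0. Multiplying the two inequalities yields X > 4X for X = bd(a+1)(a-1) > 0.
-/

theorem cubic_coeffs_eq_of_factorization {K : Type*} [Field K] [CharZero K]
    {k u v w x₁ x₂ x₃ : K}
    (h : ∀ z, k * z ^ 3 + u * z ^ 2 + v * z + w = k * (z - x₁) * (z - x₂) * (z - x₃)) :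
    u = -k * (x₁ + x₂ + x₃) ∧ v = k * (x₁ * x₂ + x₁ * x₃ + x₂ * x₃) ∧
      w = -k * (x₁ * x₂ * x₃) :=
  ⟨by linear_combination (h 1 + h (-1)) / 2 - h 0,
    by linear_combination (h 1 - h (-1)) / 2,
    by linear_combination h 0⟩

theorem cubic_coeffs_pos_of_roots_neg {R : Type*} [CommRing R] [LinearOrder R] [IsStrictOrderedRing R]
    {k x₁ x₂ x₃ : R} (hk : 0 < k) (h₁ : x₁ < 0) (h₂ : x₂ < 0) (h₃ : x₃ < 0) :
    0 < -k * (x₁ + x₂ + x₃) ∧ 0 < k * (x₁ * x₂ + x₁ * x₃ + x₂ * x₃) := by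
  have h₁₂ := mul_pos_of_neg_of_neg h₁ h₂
  have h₁₃ := mul_pos_of_neg_of_neg h₁ h₃
  have h₂₃ := mul_pos_of_neg_of_neg h₂ h₃
  constructor
  · rw [neg_mul, ← mul_neg]
    exact mul_pos hk (by linarith)
  · exact mul_pos hk (by linarith)

theorem not_middle_coeffs_pos {a b c d s : ℝ} (hb : b < 0) (hd : d < 0)
    (hs : s ^ 2 = d * (a - 1)) (hs0 : 0 ≤ s) (hc : 2 * s - b ≤ c)
    (hU : 0 < 2 * a * b + a * c + c) (hV : 0 < a * d + b * c + b ^ 2 + d) : False := by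
  have hbc : b * c ≤ b * (2 * s - b) := mul_le_mul_of_nonpos_left hc hb.le
  have hbs : 0 ≤ -(2 * b * s) := by nlinarith
  have hV' : -(2 * b * s) < d * (a + 1) := by linarith
  have ha : a + 1 < 0 := neg_of_mul_pos_right (hbs.trans_lt hV') hd.le
  have hac : c * (a + 1) ≤ (2 * s - b) * (a + 1) := mul_le_mul_of_nonpos_right hc ha.le
  have hsa : 0 ≤ -(2 * s * (a + 1)) := by nlinarith
  have hU' : -(2 * s * (a + 1)) < b * (a - 1) := by linarith
  have hprod := mul_lt_mul'' hV' hU' hbs hsa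
  have hX : 0 < b * d * ((a + 1) * (a - 1)) :=
    mul_pos (mul_pos_of_neg_of_neg hb hd) (mul_pos_of_neg_of_neg ha (by linarith))
  have hsq : -(2 * b * s) * -(2 * s * (a + 1)) = 4 * (b * d * ((a + 1) * (a - 1))) := by
    linear_combination (4 * b * (a + 1)) * hs
  linarith

theorem stmt_17 (a b c d : ℝ) (ha : a < 0) (hb : b < 0) (hd : d < 0)
    (hc : 2 * Real.sqrt (d * (a - 1)) - b ≤ c)
    (x₁ x₂ x₃ : ℝ)
    (hfact : ∀ z : ℝ,
      a ^ 2 * z ^ 3 + (2 * a * b + a * c + c) * z ^ 2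
        + (a * d + b * c + b ^ 2 + d) * z + b * d
      = a ^ 2 * (z - x₁) * (z - x₂) * (z - x₃))
    (hx1 : x₁ < -b / a) :
    0 < x₂ ∧ 0 < x₃ := by
  obtain ⟨hU, hV, hW⟩ := cubic_coeffs_eq_of_factorization hfact
  have ha2 : 0 < a ^ 2 := sq_pos_of_neg ha
  have hx₁ : x₁ < 0 := hx1.trans (div_neg_of_pos_of_neg (neg_pos.2 hb) ha)
  have hx₂₃ : 0 < x₂ * x₃ := by
    refine pos_of_mul_neg_right ?_ hx₁.le
    nlinarith [mul_pos_of_neg_of_neg hb hd]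
  rcases pos_and_pos_or_neg_and_neg_of_mul_pos hx₂₃ with h | ⟨hx₂, hx₃⟩
  · exact h
  obtain ⟨hUpos, hVpos⟩ := cubic_coeffs_pos_of_roots_neg ha2 hx₁ hx₂ hx₃
  have hs : Real.sqrt (d * (a - 1)) ^ 2 = d * (a - 1) := Real.sq_sqrt (by nlinarith)
  exact (not_middle_coeffs_pos hb hd hs (Real.sqrt_nonneg _) hc (hU ▸ hUpos) (hV ▸ hVpos)).elim
end

section
/- Let a, b, c, d be reals with a ≠ 0, c ≠ 0, and let W_3(z) = a²z³ + (2ab+ac+c)z² + (ad+bc+b²+d)z + bd be the third polynomial of the normalized sequence. If ξ is a real root of W_3 with F(ξ) ≠ 0, where F(z) = (az+b)² + (cz+d) = a²z² + (2ab+c)z + (b²+d), then ξ = −(aξ+b)(cξ+d)/F(ξ), and g(ξ) = −(cξ+d)³/F(ξ)², where g(z) = (1−a)z² − (b+c)z − d. In particular g(ξ) > 0 implies cξ + d < 0. -/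
/-!
Write `A = a z + b`, `B = c z + d` and `F = A² + B`. Then `W₃(z) = F z + A B`, so a root with
`F ≠ 0` is `ξ = -A B / F`, and `g(z) = z² - A z - B`; substituting `ξ` and clearing `F²` leaves
`A²B² + A²B F - B F² = -B³`. Since `F² > 0`, the sign of `g(ξ)` is the sign of `-B³`.
-/

section Field

variable {K : Type*} [Field K] {A B z : K}

theorem eq_neg_mul_div_of_mul_add_mul_eq_zero (hF : A ^ 2 + B ≠ 0)
    (h : (A ^ 2 + B) * z + A * B = 0) : z = -(A * B) / (A ^ 2 + B) := by
  rw [eq_div_iff hF]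
  linear_combination h

theorem sq_sub_mul_sub_eq_neg_pow_three_div_sq (hF : A ^ 2 + B ≠ 0)
    (h : (A ^ 2 + B) * z + A * B = 0) : z ^ 2 - A * z - B = -B ^ 3 / (A ^ 2 + B) ^ 2 := by
  rw [eq_div_iff (pow_ne_zero 2 hF)]
  linear_combination ((A ^ 2 + B) * z - A * B - A * (A ^ 2 + B)) * h

end Field

theorem neg_of_pos_neg_pow_three_div_sq {K : Type*} [Field K] [LinearOrder K]
    [IsStrictOrderedRing K] {B F : K} (h : 0 < -B ^ 3 / F ^ 2) : B < 0 := by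
  by_contra! hB
  have : -B ^ 3 / F ^ 2 ≤ 0 :=
    div_nonpos_of_nonpos_of_nonneg (neg_nonpos.mpr (pow_nonneg hB 3)) (sq_nonneg F)
  linarith

theorem stmt_18_general (a b c d : ℝ) (ξ : ℝ)
    (hroot : a ^ 2 * ξ ^ 3 + (2 * a * b + a * c + c) * ξ ^ 2
        + (a * d + b * c + b ^ 2 + d) * ξ + b * d = 0)
    (hF : a ^ 2 * ξ ^ 2 + (2 * a * b + c) * ξ + (b ^ 2 + d) ≠ 0) :
    ξ = -((a * ξ + b) * (c * ξ + d)) / (a ^ 2 * ξ ^ 2 + (2 * a * b + c) * ξ + (b ^ 2 + d)) ∧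
    (1 - a) * ξ ^ 2 - (b + c) * ξ - d
      = -(c * ξ + d) ^ 3 / (a ^ 2 * ξ ^ 2 + (2 * a * b + c) * ξ + (b ^ 2 + d)) ^ 2 ∧
    (0 < (1 - a) * ξ ^ 2 - (b + c) * ξ - d → c * ξ + d < 0) := by
  have hF_eq : a ^ 2 * ξ ^ 2 + (2 * a * b + c) * ξ + (b ^ 2 + d)
      = (a * ξ + b) ^ 2 + (c * ξ + d) := by
    ring
  have hg_eq : (1 - a) * ξ ^ 2 - (b + c) * ξ - d = ξ ^ 2 - (a * ξ + b) * ξ - (c * ξ + d) := by ring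
  rw [hF_eq] at hF ⊢
  rw [hg_eq]
  have hW : ((a * ξ + b) ^ 2 + (c * ξ + d)) * ξ + (a * ξ + b) * (c * ξ + d) = 0 := by
    linear_combination hroot
  have hg := sq_sub_mul_sub_eq_neg_pow_three_div_sq hF hW
  refine ⟨eq_neg_mul_div_of_mul_add_mul_eq_zero hF hW, hg, fun hpos => ?_⟩
  exact neg_of_pos_neg_pow_three_div_sq (hg ▸ hpos)

theorem stmt_18 (a b c d : ℝ) (ha : a ≠ 0) (hc : c ≠ 0) (ξ : ℝ)
    (hroot : a ^ 2 * ξ ^ 3 + (2 * a * b + a * c + c) * ξ ^ 2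
        + (a * d + b * c + b ^ 2 + d) * ξ + b * d = 0)
    (hF : a ^ 2 * ξ ^ 2 + (2 * a * b + c) * ξ + (b ^ 2 + d) ≠ 0) :
    ξ = -((a * ξ + b) * (c * ξ + d)) / (a ^ 2 * ξ ^ 2 + (2 * a * b + c) * ξ + (b ^ 2 + d)) ∧
    (1 - a) * ξ ^ 2 - (b + c) * ξ - d
      = -(c * ξ + d) ^ 3 / (a ^ 2 * ξ ^ 2 + (2 * a * b + c) * ξ + (b ^ 2 + d)) ^ 2 ∧
    (0 < (1 - a) * ξ ^ 2 - (b + c) * ξ - d → c * ξ + d < 0) :=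
  stmt_18_general a b c d ξ hroot hF
end

section
/- Let a, b, d < 0 and c ≥ c^+ = 2√(d(a−1)) − b, with Δ_Δ = −a²d + abc + c² > 0 and x_Δ^+ = (−ab − 2c + 2√Δ_Δ)/a² the larger root of Δ(z) = a²z² + (2ab+4c)z + (b²+4d). Then F(x_Δ^+) = −3(c·x_Δ^+ + d) > 0, where F(z) = a²z² + (2ab+c)z + (b²+d); in particular the unique positive zero x₀ of F satisfies x₀ < x_Δ^+. -/
/-!
Write `A z = a z + b`, `B z = c z + d`, `F = A² + B` and `Δ = A² + 4B`. Since `x_Δ^+` is a root of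
`Δ`, `F(x_Δ^+) = Δ(x_Δ^+) - 3 B(x_Δ^+) = -3 B(x_Δ^+)`, and a direct computation gives
`a² B(x_Δ^+) = -(√Δ_Δ - c)²`, which is negative because `c < √Δ_Δ` when `a, b, d < 0 < c`.
Moreover `F'(x_Δ^+) = 4√Δ_Δ - 3c > 0`, so the convex `F` stays positive on `[x_Δ^+, ∞)`,
and every zero of `F` lies to the left of `x_Δ^+`.
-/

theorem quadratic_pos_of_le {α β γ x y : ℝ} (hα : 0 ≤ α) (hx : 0 < α * x ^ 2 + β * x + γ)
    (hslope : 0 ≤ 2 * α * x + β) (hxy : x ≤ y) : 0 < α * y ^ 2 + β * y + γ := by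
  have hdiff : α * y ^ 2 + β * y + γ - (α * x ^ 2 + β * x + γ)
      = (y - x) * (2 * α * x + β) + α * (y - x) ^ 2 := by ring
  have : 0 ≤ (y - x) * (2 * α * x + β) + α * (y - x) ^ 2 := by
    have := sub_nonneg.mpr hxy
    positivity
  linarith

section

variable {a b c d s x : ℝ}

theorem discr_eval_eq_zero (ha : a ≠ 0) (hs : s ^ 2 = -a ^ 2 * d + a * b * c + c ^ 2)
    (hx : a ^ 2 * x = -a * b - 2 * c + 2 * s) :
    a ^ 2 * x ^ 2 + (2 * a * b + 4 * c) * x + (b ^ 2 + 4 * d) = 0 := by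
  have h : a ^ 2 * (a ^ 2 * x ^ 2 + (2 * a * b + 4 * c) * x + (b ^ 2 + 4 * d)) = 0 := by
    linear_combination (a ^ 2 * x + a * b + 2 * c + 2 * s) * hx + 4 * hs
  simpa [ha] using h

theorem sq_mul_eval_linear_eq (hs : s ^ 2 = -a ^ 2 * d + a * b * c + c ^ 2)
    (hx : a ^ 2 * x = -a * b - 2 * c + 2 * s) :
    a ^ 2 * (c * x + d) = -(s - c) ^ 2 := by
  linear_combination c * hx + hs

theorem lt_sqrt_discr (ha : a < 0) (hb : b < 0) (hc : 0 < c) (hd : d < 0) :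
    c < Real.sqrt (-a ^ 2 * d + a * b * c + c ^ 2) := by
  rw [Real.lt_sqrt hc.le]
  nlinarith [mul_neg_of_neg_of_pos hb hc, mul_pos_of_neg_of_neg ha hd]

end

theorem stmt_19 (a b c d : ℝ) (ha : a < 0) (hb : b < 0) (hd : d < 0)
    (hc : 2 * Real.sqrt (d * (a - 1)) - b ≤ c)
    (hΔΔ : 0 < -a ^ 2 * d + a * b * c + c ^ 2) :
    (a ^ 2 * ((-a * b - 2 * c + 2 * Real.sqrt (-a ^ 2 * d + a * b * c + c ^ 2)) / a ^ 2) ^ 2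
        + (2 * a * b + c) * ((-a * b - 2 * c + 2 * Real.sqrt (-a ^ 2 * d + a * b * c + c ^ 2)) / a ^ 2)
        + (b ^ 2 + d)
      = -3 * (c * ((-a * b - 2 * c + 2 * Real.sqrt (-a ^ 2 * d + a * b * c + c ^ 2)) / a ^ 2) + d)) ∧
    0 < -3 * (c * ((-a * b - 2 * c + 2 * Real.sqrt (-a ^ 2 * d + a * b * c + c ^ 2)) / a ^ 2) + d) ∧
    ∀ x₀ : ℝ, 0 < x₀ →
      a ^ 2 * x₀ ^ 2 + (2 * a * b + c) * x₀ + (b ^ 2 + d) = 0 →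
      x₀ < (-a * b - 2 * c + 2 * Real.sqrt (-a ^ 2 * d + a * b * c + c ^ 2)) / a ^ 2 := by
  have hc0 : 0 < c := by linarith [Real.sqrt_nonneg (d * (a - 1))]
  have hcs := lt_sqrt_discr ha hb hc0 hd
  set s := Real.sqrt (-a ^ 2 * d + a * b * c + c ^ 2)
  have hs : s ^ 2 = -a ^ 2 * d + a * b * c + c ^ 2 := Real.sq_sqrt hΔΔ.le
  set x := (-a * b - 2 * c + 2 * s) / a ^ 2
  have hx : a ^ 2 * x = -a * b - 2 * c + 2 * s := mul_div_cancel₀ _ (pow_ne_zero 2 ha.ne)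
  have hFx : a ^ 2 * x ^ 2 + (2 * a * b + c) * x + (b ^ 2 + d) = -3 * (c * x + d) := by
    linear_combination discr_eval_eq_zero ha.ne hs hx
  have hBx : c * x + d < 0 := by
    have := sq_mul_eval_linear_eq hs hx
    nlinarith [pow_pos (sub_pos.mpr hcs) 2, pow_pos (neg_pos.mpr ha) 2]
  refine ⟨hFx, by linarith, fun x₀ _ hx₀ => ?_⟩
  by_contra! hxx₀
  have : 0 < a ^ 2 * x₀ ^ 2 + (2 * a * b + c) * x₀ + (b ^ 2 + d) :=
    quadratic_pos_of_le (sq_nonneg a) (by linarith) (by linarith) hxx₀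
  linarith
end
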